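/- arXiv:1809.02529 — 4 statements merged into one kernel-verified Lean document; each statement's English description precedes it below -/
import Mathlib

section
/- Let M̄ > 0 and T ≥ 0. Suppose ρ : [0,T] → ℝ is differentiable with ρ'(t) ≤ −ρ(t)²/2 + M̄ for all t ∈ [0,T], and ρ(0) < −√(2M̄). Then T < (1/√(2M̄)) · ln( (ρ(0) − √(2M̄)) / (ρ(0) + √(2M̄)) ). -/
open Set Real

/-!
Put `s = √(2M̄)`, so the inequality reads `ρ' ≤ -(ρ² - s²)/2`. Where `ρ` meets any level `c < -s`,
the right-hand side is negative, so `ρ` cannot cross that level upwards and stays below `-s`.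
There `L(ρ) = log((ρ - s)/(ρ + s))` (that is, `2 arcoth(ρ/s)`) is defined and positive, and
`L(ρ)' = 2sρ'/(ρ² - s²) ≤ -s`. Hence `0 < L(ρ(T)) ≤ L(ρ(0)) - sT`.
-/

theorem image_le_of_deriv_right_neg_of_eq {f f' : ℝ → ℝ} {a b c : ℝ}
    (hf : ContinuousOn f (Icc a b)) (hf' : ∀ x ∈ Ico a b, HasDerivWithinAt f (f' x) (Ici x) x)
    (ha : f a ≤ c) (hc : ∀ x ∈ Ico a b, f x = c → f' x < 0) : ∀ x ∈ Icc a b, f x ≤ c :=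
  image_le_of_deriv_right_lt_deriv_boundary hf hf' ha (fun _ => hasDerivAt_const _ c) hc

theorem riccati_image_le {f f' : ℝ → ℝ} {a b c M : ℝ}
    (hf : ContinuousOn f (Icc a b)) (hf' : ∀ x ∈ Ico a b, HasDerivWithinAt f (f' x) (Ici x) x)
    (hineq : ∀ x ∈ Ico a b, f' x ≤ -f x ^ 2 / 2 + M) (hcM : 2 * M < c ^ 2) (ha : f a ≤ c) :
    ∀ x ∈ Icc a b, f x ≤ c :=
  image_le_of_deriv_right_neg_of_eq hf hf' ha fun x hx hfx => by
    have := hineq x hx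
    rw [hfx] at this
    linarith

theorem hasDerivAt_log_div_sub_add {s x : ℝ} (h₁ : x - s ≠ 0) (h₂ : x + s ≠ 0) :
    HasDerivAt (fun y => log ((y - s) / (y + s))) (2 * s / (x ^ 2 - s ^ 2)) x := by
  have hdiv : HasDerivAt (fun y => (y - s) / (y + s))
      ((1 * (x + s) - (x - s) * 1) / (x + s) ^ 2) x :=
    ((hasDerivAt_id x).sub_const s).div ((hasDerivAt_id x).add_const s) h₂
  convert hdiv.log (div_ne_zero h₁ h₂) using 1
  rw [show x ^ 2 - s ^ 2 = (x - s) * (x + s) by ring]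
  field_simp
  ring

theorem riccati_log_div_le {f f' : ℝ → ℝ} {a b s : ℝ} (hs : 0 ≤ s)
    (hf : ContinuousOn f (Icc a b)) (hf' : ∀ x ∈ Ico a b, HasDerivWithinAt f (f' x) (Ici x) x)
    (hineq : ∀ x ∈ Ico a b, f' x ≤ -(f x ^ 2 - s ^ 2) / 2) (hlt : ∀ x ∈ Icc a b, f x < -s) :
    ∀ x ∈ Icc a b, log ((f x - s) / (f x + s)) ≤ log ((f a - s) / (f a + s)) - s * (x - a) := by
  have hL : ∀ x ∈ Icc a b, HasDerivAt (fun y => log ((y - s) / (y + s)))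
      (2 * s / (f x ^ 2 - s ^ 2)) (f x) := fun x hx => by
    have := hlt x hx
    exact hasDerivAt_log_div_sub_add (by linarith) (by linarith)
  refine image_le_of_deriv_right_le_deriv_boundary
    (fun x hx => (hL x hx).continuousAt.comp_continuousWithinAt (hf x hx))
    (fun x hx => (hL x (Ico_subset_Icc_self hx)).comp_hasDerivWithinAt x (hf' x hx))
    (by simp) (by fun_prop)
    (fun x _ => ((hasDerivAt_id x).sub_const a).const_mul s |>.const_sub _ |>.hasDerivWithinAt)
    fun x hx => ?_
  have hgap : 0 < f x ^ 2 - s ^ 2 := by nlinarith [hlt x (Ico_subset_Icc_self hx)]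
  calc 2 * s / (f x ^ 2 - s ^ 2) * f' x
      ≤ 2 * s / (f x ^ 2 - s ^ 2) * (-(f x ^ 2 - s ^ 2) / 2) := by
        gcongr
        exact hineq x hx
    _ = -(s * 1) := by field_simp

/-- Finite-time blow-up for the Riccati differential inequality: if `ρ' ≤ -ρ²/2 + M̄`
on `[0,T]` and `ρ(0) < -√(2M̄)`, then
`T < (1/√(2M̄)) · log((ρ(0) - √(2M̄))/(ρ(0) + √(2M̄)))`. -/
theorem riccati_blowup (Mbar T : ℝ) (hM : 0 < Mbar) (hT : 0 ≤ T) (ρ ρ' : ℝ → ℝ)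
    (hρ : ∀ t ∈ Set.Icc (0 : ℝ) T, HasDerivWithinAt ρ (ρ' t) (Set.Icc (0 : ℝ) T) t)
    (hineq : ∀ t ∈ Set.Icc (0 : ℝ) T, ρ' t ≤ -(ρ t) ^ 2 / 2 + Mbar)
    (h0 : ρ 0 < -Real.sqrt (2 * Mbar)) :
    T < (1 / Real.sqrt (2 * Mbar)) *
      Real.log ((ρ 0 - Real.sqrt (2 * Mbar)) / (ρ 0 + Real.sqrt (2 * Mbar))) := by
  set s := √(2 * Mbar)
  have hs : 0 < s := sqrt_pos.mpr (by linarith)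
  have hs2 : s ^ 2 = 2 * Mbar := sq_sqrt (by linarith)
  have hcont : ContinuousOn ρ (Icc 0 T) := fun t ht => (hρ t ht).continuousWithinAt
  have hright : ∀ t ∈ Ico 0 T, HasDerivWithinAt ρ (ρ' t) (Ici t) t := fun t ht =>
    (hρ t (Ico_subset_Icc_self ht)).mono_of_mem_nhdsWithin (Icc_mem_nhdsGE_of_mem ht)
  have hbelow : ∀ t ∈ Icc 0 T, ρ t < -s := fun t ht => by
    -- the level `(ρ 0 - s) / 2` lies strictly between `ρ 0` and `-s`
    have hlevel : 2 * Mbar < ((ρ 0 - s) / 2) ^ 2 := by nlinarith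
    have := riccati_image_le hcont hright (fun t ht => hineq t (Ico_subset_Icc_self ht)) hlevel
      (by linarith) t ht
    linarith
  have hlog := riccati_log_div_le hs.le hcont hright
    (fun t ht => by linarith [hineq t (Ico_subset_Icc_self ht)]) hbelow T (right_mem_Icc.2 hT)
  have hpos : 0 < log ((ρ T - s) / (ρ T + s)) := by
    have := hbelow T (right_mem_Icc.2 hT)
    exact log_pos ((one_lt_div_of_neg (by linarith)).2 (by linarith))
  rw [one_div_mul_eq_div, lt_div_iff₀ hs]
  linarith
end

section
/- Steepening lemma (wave breaking). Let M ≥ 0 and set M̄ = M² + 2M³. There is no u : ℝ × [0,∞) → ℝ and x̄ : [0,∞) → ℝ with all of the following properties: (i) u is jointly smooth and |u(x,t)| ≤ M for all x ∈ ℝ, t ≥ 0; (ii) for each t ≥ 0 the functions x ↦ u(x,t), u_x(x,t), u_{xx}(x,t) are integrable and bounded on ℝ; (iii) u satisfies for all x, t the nonlocal mCH equation u_t(x,t) + u(x,t)·u_x(x,t) + ∂_x[∫_ℝ (1/2)·exp(−|x−y|)·( u(y,t)³ − u(y,t)²/2 + (∂_y u(y,t))²/2 ) dy](x) = 0; (iv)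 x̄ is differentiable and u_{xx}(x̄(t),t) = 0 for every t ≥ 0 (a persistent inflection point); (v) u_x(x̄(0),0) < −√(2M̄). In other words, under (i)–(iv), if the initial slope at the inflection point satisfies u_x(x̄(0),0) < −√(2(M²+2M³)), then the solution cannot remain smooth and bounded for all t ≥ 0: the negative slope at the inflection point becomes vertical in finite time. -/
open MeasureTheory Real

section Helpers

open Set Topology Filter

lemma hasDerivAt_comp_fst {g : ℝ × ℝ → ℝ} {x t : ℝ} (h : DifferentiableAt ℝ g (x, t)) :
    HasDerivAt (fun y => g (y, t)) (fderiv ℝ g (x, t) (1, 0)) x :=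
  h.hasFDerivAt.comp_hasDerivAt x ((hasDerivAt_id x).prodMk (hasDerivAt_const x t))

lemma hasDerivAt_comp_snd {g : ℝ × ℝ → ℝ} {x t : ℝ} (h : DifferentiableAt ℝ g (x, t)) :
    HasDerivAt (fun s => g (x, s)) (fderiv ℝ g (x, t) (0, 1)) t :=
  h.hasFDerivAt.comp_hasDerivAt t ((hasDerivAt_const t x).prodMk (hasDerivAt_id t))

lemma hasDerivAt_integral_Iio {g : ℝ → ℝ} (hg : Continuous g)
    (hgi : ∀ b : ℝ, IntegrableOn g (Iic b)) (x : ℝ) :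
    HasDerivAt (fun b => ∫ y in Iic b, g y) (g x) x := by
  set a := x - 1 with ha
  have hax : a < x := by simp [ha]
  have key : ∀ b ∈ Ioi a, (∫ y in Iic b, g y) = (∫ y in Iic a, g y) + ∫ y in a..b, g y := by
    intro b hb
    have hab : a ≤ b := le_of_lt hb
    rw [intervalIntegral.integral_of_le hab,
      ← setIntegral_union (Iic_disjoint_Ioc le_rfl) measurableSet_Ioc (hgi a)
      ((hgi b).mono_set Ioc_subset_Iic_self), Iic_union_Ioc_eq_Iic hab]
  have h2 : HasDerivAt (fun b => (∫ y in Iic a, g y) + ∫ y in a..b, g y) (g x) x := by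
    have := intervalIntegral.integral_hasDerivAt_right
      (hg.intervalIntegrable a x)
      (hg.stronglyMeasurableAtFilter volume (𝓝 x))
      hg.continuousAt
    exact this.const_add _
  refine h2.congr_of_eventuallyEq ?_
  filter_upwards [Ioi_mem_nhds hax] with b hb
  exact key b hb

lemma hasDerivAt_integral_Ioi {g : ℝ → ℝ} (hg : Continuous g)
    (hgi : ∀ b : ℝ, IntegrableOn g (Ioi b)) (x : ℝ) :
    HasDerivAt (fun b => ∫ y in Ioi b, g y) (-g x) x := by
  set a := x + 1 with ha
  have hax : x < a := by simp [ha]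
  have key : ∀ b ∈ Iio a, (∫ y in Ioi b, g y) = (∫ y in Ioi a, g y) + ∫ y in b..a, g y := by
    intro b hb
    have hab : b ≤ a := le_of_lt hb
    rw [intervalIntegral.integral_of_le hab]
    rw [add_comm, ← setIntegral_union (Ioc_disjoint_Ioi le_rfl) measurableSet_Ioi
      ((hgi b).mono_set (Ioc_subset_Ioi_self)) (hgi a), Ioc_union_Ioi_eq_Ioi hab]
  have h2 : HasDerivAt (fun b => (∫ y in Ioi a, g y) + ∫ y in b..a, g y) (-g x) x := by
    have := intervalIntegral.integral_hasDerivAt_left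
      (hg.intervalIntegrable x a)
      (hg.stronglyMeasurableAtFilter volume (𝓝 x))
      hg.continuousAt
    exact this.const_add _
  refine h2.congr_of_eventuallyEq ?_
  filter_upwards [Iio_mem_nhds hax] with b hb
  exact key b hb

lemma conv_package {q : ℝ → ℝ} (hc : Continuous q) (hi : Integrable q) :
    ∃ F' : ℝ → ℝ,
      (∀ x, HasDerivAt (fun x' => ∫ y, (1/2) * exp (-|x' - y|) * q y) (F' x) x) ∧
      (∀ x, HasDerivAt F' ((∫ y, (1/2) * exp (-|x - y|) * q y) - q x) x) ∧
      (∀ K : ℝ, 0 ≤ K → (∀ y, -K ≤ q y) → ∀ x, -K ≤ ∫ y, (1/2) * exp (-|x - y|) * q y) := by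
  set g1 : ℝ → ℝ := fun y => exp y * q y with hg1
  set g2 : ℝ → ℝ := fun y => exp (-y) * q y with hg2
  have hg1c : Continuous g1 := (continuous_exp).mul hc
  have hg2c : Continuous g2 := (continuous_exp.comp continuous_neg).mul hc
  have hS1 : ∀ b : ℝ, IntegrableOn g1 (Iic b) := by
    intro b
    refine Integrable.mono (hi.restrict.const_mul (exp b)) hg1c.aestronglyMeasurable ?_
    filter_upwards [ae_restrict_mem measurableSet_Iic] with y hy
    simp only [hg1, norm_mul, norm_eq_abs, abs_exp]
    have : exp y ≤ exp b := exp_le_exp.2 hy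
    exact mul_le_mul_of_nonneg_right this (abs_nonneg _)
  have hS2 : ∀ b : ℝ, IntegrableOn g2 (Ioi b) := by
    intro b
    refine Integrable.mono (hi.restrict.const_mul (exp (-b))) hg2c.aestronglyMeasurable ?_
    filter_upwards [ae_restrict_mem measurableSet_Ioi] with y hy
    simp only [hg2, norm_mul, norm_eq_abs, abs_exp]
    have : exp (-y) ≤ exp (-b) := exp_le_exp.2 (by linarith [le_of_lt (Set.mem_Ioi.mp hy)])
    exact mul_le_mul_of_nonneg_right this (abs_nonneg _)
  set A : ℝ → ℝ := fun x => ∫ y in Iic x, g1 y with hA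
  set B : ℝ → ℝ := fun x => ∫ y in Ioi x, g2 y with hB
  have hAd : ∀ x, HasDerivAt A (g1 x) x := fun x => hasDerivAt_integral_Iio hg1c hS1 x
  have hBd : ∀ x, HasDerivAt B (-g2 x) x := fun x => hasDerivAt_integral_Ioi hg2c hS2 x
  -- integrability of the full integrand
  have hker : ∀ x : ℝ, Integrable (fun y => (1/2) * exp (-|x - y|) * q y) := by
    intro x
    refine Integrable.mono hi ?_ ?_
    · exact (((continuous_const.mul
        ((continuous_exp.comp ((continuous_const.sub continuous_id).abs.neg)))).mul hc)).aestronglyMeasurable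
    · refine Filter.Eventually.of_forall fun y => ?_
      simp only [norm_mul, norm_eq_abs, abs_exp]
      have h1 : exp (-|x - y|) ≤ 1 := exp_le_one_iff.2 (neg_nonpos.2 (abs_nonneg _))
      have : |(1:ℝ)/2| * exp (-|x - y|) ≤ 1 := by
        rw [abs_of_nonneg (by norm_num : (0:ℝ) ≤ 1/2)]; nlinarith [exp_pos (-|x - y|)]
      calc |(1:ℝ)/2| * exp (-|x - y|) * |q y| ≤ 1 * |q y| :=
            mul_le_mul_of_nonneg_right this (abs_nonneg _)
        _ = |q y| := one_mul _
  -- the splitting identity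
  have hsplit : ∀ x : ℝ, (∫ y, (1/2) * exp (-|x - y|) * q y)
      = (1/2) * (exp (-x) * A x + exp x * B x) := by
    intro x
    have hIic : ∀ y ∈ Iic x, (1/2) * exp (-|x - y|) * q y = ((1/2) * exp (-x)) * g1 y := by
      intro y hy
      have : |x - y| = x - y := abs_of_nonneg (by simpa using hy)
      simp only [this, hg1]
      rw [show -(x - y) = -x + y by ring, exp_add]
      ring
    have hIoi : ∀ y ∈ Ioi x, (1/2) * exp (-|x - y|) * q y = ((1/2) * exp x) * g2 y := by
      intro y hy
      have : |x - y| = y - x := by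
        rw [abs_of_nonpos (by simp [le_of_lt (Set.mem_Ioi.mp hy)])]; ring
      simp only [this, hg2]
      rw [show -(y - x) = x + -y by ring, exp_add]
      ring
    rw [← intervalIntegral.integral_Iic_add_Ioi ((hker x).integrableOn) ((hker x).integrableOn)]
    rw [setIntegral_congr_fun measurableSet_Iic hIic,
        setIntegral_congr_fun measurableSet_Ioi hIoi,
        integral_const_mul _ _, integral_const_mul _ _]
    ring
  refine ⟨fun x => (1/2) * (-(exp (-x)) * A x + exp x * B x), ?_, ?_, ?_⟩
  · intro x
    have h1 : HasDerivAt (fun x' => (1/2) * (exp (-x') * A x' + exp x' * B x'))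
        ((1/2) * (-(exp (-x)) * A x + exp x * B x)) x := by
      have e1 : HasDerivAt (fun x' : ℝ => exp (-x')) (-(exp (-x))) x := by
        simpa using ((hasDerivAt_neg x).exp)
      have d1 : HasDerivAt (fun x' => exp (-x') * A x')
          (-(exp (-x)) * A x + exp (-x) * g1 x) x := e1.mul (hAd x)
      have d2 : HasDerivAt (fun x' => exp x' * B x')
          (exp x * B x + exp x * (-g2 x)) x := (hasDerivAt_exp x).mul (hBd x)
      have := (d1.add d2).const_mul (1/2 : ℝ)
      convert (show HasDerivAt (fun x' => (1/2) * (exp (-x') * A x' + exp x' * B x')) _ x from this) using 1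
      simp only [hg1, hg2]
      rw [show exp (-x) * (exp x * q x) = exp (-x + x) * q x by rw [exp_add]; ring,
          show exp x * -(exp (-x) * q x) = -(exp (x + -x) * q x) by rw [exp_add]; ring]
      simp; ring
    refine h1.congr_of_eventuallyEq (Filter.Eventually.of_forall fun x' => hsplit x')
  · intro x
    have e1 : HasDerivAt (fun x' : ℝ => exp (-x')) (-(exp (-x))) x := by
      simpa using ((hasDerivAt_neg x).exp)
    have d1 : HasDerivAt (fun x' => -(exp (-x')) * A x')
        (exp (-x) * A x + -(exp (-x)) * g1 x) x := by
      have := (e1.neg).mul (hAd x)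
      convert (show HasDerivAt (fun x' => -(exp (-x')) * A x') (- -(exp (-x)) * A x + -(exp (-x)) * g1 x) x from this) using 1; ring
    have d2 : HasDerivAt (fun x' => exp x' * B x')
        (exp x * B x + exp x * (-g2 x)) x := (hasDerivAt_exp x).mul (hBd x)
    have := (d1.add d2).const_mul (1/2 : ℝ)
    convert (show HasDerivAt (fun x' => (1/2) * (-(exp (-x')) * A x' + exp x' * B x')) _ x from this) using 1
    rw [hsplit x]
    simp only [hg1, hg2]
    rw [show -(exp (-x)) * (exp x * q x) = -(exp (-x + x) * q x) by rw [exp_add]; ring,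
        show exp x * -(exp (-x) * q x) = -(exp (x + -x) * q x) by rw [exp_add]; ring]
    simp; ring
  · intro K hK hq x
    rw [hsplit x]
    have hAb : -(K * exp x) ≤ A x := by
      have : ∫ y in Iic x, (-K) * exp y ≤ ∫ y in Iic x, g1 y := by
        refine setIntegral_mono_on ((integrableOn_exp_Iic x).const_mul _) (hS1 x)
          measurableSet_Iic fun y _ => ?_
        have := hq y
        simp only [hg1]
        nlinarith [exp_pos y]
      rwa [integral_const_mul _ _, integral_exp_Iic, show (-K) * exp x = -(K * exp x) by ring] at this
    have hBb : -(K * exp (-x)) ≤ B x := by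
      have hIexp : IntegrableOn (fun y : ℝ => exp (-y)) (Ioi x) := by
        have := exp_neg_integrableOn_Ioi x (zero_lt_one)
        simpa using this
      have : ∫ y in Ioi x, (-K) * exp (-y) ≤ ∫ y in Ioi x, g2 y := by
        refine setIntegral_mono_on (hIexp.const_mul _) (hS2 x)
          measurableSet_Ioi fun y _ => ?_
        have := hq y
        simp only [hg2]
        nlinarith [exp_pos (-y)]
      rwa [integral_const_mul _ _, integral_exp_neg_Ioi, show (-K) * exp (-x) = -(K * exp (-x)) by ring] at this
    have hxx : exp (-x) * exp x = 1 := by rw [← exp_add]; simp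
    nlinarith [mul_le_mul_of_nonneg_left hAb (exp_pos (-x)).le,
      mul_le_mul_of_nonneg_left hBb (exp_pos x).le]

lemma riccati_blowup_s5 {ρ ρ' : ℝ → ℝ} {Mb : ℝ} (hMb : 0 ≤ Mb)
    (hd : ∀ t, HasDerivAt ρ (ρ' t) t)
    (hineq : ∀ t, 0 ≤ t → ρ' t ≤ -(ρ t) ^ 2 / 2 + Mb)
    (h0 : ρ 0 < -Real.sqrt (2 * Mb)) : False := by
  obtain ⟨σ, hσ⟩ : ∃ σ : ℝ → ℝ, σ = fun t => -ρ t := ⟨_, rfl⟩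
  have hσt : ∀ t, σ t = -ρ t := fun t => by rw [hσ]
  have hσd : ∀ t, HasDerivAt σ (-ρ' t) t := fun t => by rw [hσ]; exact (hd t).neg
  have hσc : Continuous σ :=
    continuous_iff_continuousAt.2 fun t => ((hσd t).differentiableAt).continuousAt
  obtain ⟨b, hb⟩ : ∃ b : ℝ, b = σ 0 := ⟨_, rfl⟩
  have hsqrt : 0 ≤ Real.sqrt (2 * Mb) := Real.sqrt_nonneg _
  have hbs : Real.sqrt (2 * Mb) < b := by rw [hb, hσt]; linarith
  have hbpos : 0 < b := lt_of_le_of_lt hsqrt hbs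
  have hb2 : 2 * Mb < b ^ 2 := by
    have := Real.sq_sqrt (by linarith : (0:ℝ) ≤ 2 * Mb)
    nlinarith
  have hlow : ∀ t, 0 ≤ t → σ t ^ 2 / 2 - Mb ≤ -ρ' t := by
    intro t ht
    have := hineq t ht
    rw [hσt]
    nlinarith [sq_nonneg (ρ t)]
  -- Step 1 : σ stays ≥ b
  have step1 : ∀ t, 0 ≤ t → b ≤ σ t := by
    by_contra hcon
    push_neg at hcon
    obtain ⟨t1, ht1, hσt1⟩ := hcon
    have ht1pos : 0 < t1 := by
      rcases lt_or_eq_of_le ht1 with h | h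
      · exact h
      · exfalso; rw [← h, ← hb] at hσt1; exact lt_irrefl _ hσt1
    have hSne : (Set.Icc 0 t1 ∩ σ ⁻¹' (Set.Ici b)).Nonempty :=
      ⟨0, ⟨le_rfl, ht1pos.le⟩, by simp [Set.mem_preimage, ← hb]⟩
    have hSbdd : BddAbove (Set.Icc 0 t1 ∩ σ ⁻¹' (Set.Ici b)) := ⟨t1, fun t ht => ht.1.2⟩
    have hSclosed : IsClosed (Set.Icc 0 t1 ∩ σ ⁻¹' (Set.Ici b)) :=
      isClosed_Icc.inter (isClosed_Ici.preimage hσc)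
    set s := sSup (Set.Icc 0 t1 ∩ σ ⁻¹' (Set.Ici b)) with hs
    have hsS : s ∈ Set.Icc 0 t1 ∩ σ ⁻¹' (Set.Ici b) := hSclosed.csSup_mem hSne hSbdd
    have hs0 : 0 ≤ s := hsS.1.1
    have hsb : b ≤ σ s := hsS.2
    have hst1 : s < t1 := by
      rcases lt_or_eq_of_le hsS.1.2 with h | h
      · exact h
      · exfalso; rw [h] at hsb; exact absurd hσt1 (not_lt.2 hsb)
    have hpos : 0 < -ρ' s := by
      have h1 := hlow s hs0
      have : b ^ 2 ≤ σ s ^ 2 := by nlinarith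
      nlinarith
    have hslope := (hasDerivAt_iff_tendsto_slope.mp (hσd s)).mono_left
      (nhdsWithin_mono s (fun t (ht : t ∈ Set.Ioi s) => ne_of_gt ht))
    have hev : ∀ᶠ t in nhdsWithin s (Set.Ioi s), 0 < slope σ s t :=
      hslope.eventually (lt_mem_nhds hpos)
    have hmem : Set.Ioc s t1 ∈ nhdsWithin s (Set.Ioi s) :=
      Ioc_mem_nhdsGT_of_mem ⟨le_rfl, hst1⟩
    obtain ⟨t, htslope, htIoc⟩ :=
      (hev.and (Filter.eventually_of_mem hmem fun t ht => ht)).exists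
    have hts : s < t := htIoc.1
    have hsl : 0 < (σ t - σ s) / (t - s) := by
      simpa [slope_def_field, div_eq_mul_inv] using htslope
    have hσtb : b < σ t := by
      have h3 : 0 < t - s := by linarith
      have h2 : 0 < σ t - σ s := by
        by_contra h4
        push_neg at h4
        have : (σ t - σ s) / (t - s) ≤ 0 := div_nonpos_of_nonpos_of_nonneg h4 h3.le
        linarith
      linarith
    have : t ∈ Set.Icc 0 t1 ∩ σ ⁻¹' (Set.Ici b) := ⟨⟨by linarith, htIoc.2⟩, hσtb.le⟩
    have := le_csSup hSbdd this
    linarith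
  -- Step 2 : comparison with 1/σ
  obtain ⟨c, hc⟩ : ∃ c : ℝ, c = 1/2 - Mb / b ^ 2 := ⟨_, rfl⟩
  have hb2pos : (0:ℝ) < b ^ 2 := by positivity
  have hcpos : 0 < c := by
    rw [hc, sub_pos, div_lt_iff₀ hb2pos]
    linarith
  have hσpos : ∀ t, 0 ≤ t → 0 < σ t := fun t ht => lt_of_lt_of_le hbpos (step1 t ht)
  obtain ⟨g, hg⟩ : ∃ g : ℝ → ℝ, g = fun t => (σ t)⁻¹ + c * t := ⟨_, rfl⟩
  have hgt : ∀ t, g t = (σ t)⁻¹ + c * t := fun t => by rw [hg]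
  have hgd : ∀ t, 0 < t → HasDerivAt g (-(-ρ' t) / (σ t) ^ 2 + c) t := by
    intro t ht
    rw [hg]
    have h1 : HasDerivAt (fun s => (σ s)⁻¹) (-(-ρ' t) / (σ t) ^ 2) t :=
      (hσd t).inv (ne_of_gt (hσpos t ht.le))
    have h2 : HasDerivAt (fun s : ℝ => c * s) c t := by
      simpa using (hasDerivAt_id t).const_mul c
    exact h1.add h2
  have hanti : AntitoneOn g (Set.Ici 0) := by
    refine antitoneOn_of_deriv_nonpos (convex_Ici 0) ?_ ?_ ?_
    · rw [hg]
      intro t ht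
      exact (((hσd t).differentiableAt.continuousAt.inv₀
        (ne_of_gt (hσpos t ht))).add (continuous_const.mul continuous_id).continuousAt).continuousWithinAt
    · intro t ht
      rw [interior_Ici] at ht
      exact ((hgd t ht).differentiableAt).differentiableWithinAt
    · intro t ht
      rw [interior_Ici] at ht
      rw [(hgd t ht).deriv]
      have h1 := hlow t ht.le
      have h2 := step1 t ht.le
      have hσp : 0 < σ t := hσpos t ht.le
      have hσsq : b ^ 2 ≤ σ t ^ 2 := by nlinarith
      have hσsqpos : (0:ℝ) < σ t ^ 2 := by positivity
      have key : c * σ t ^ 2 ≤ -ρ' t := by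
        have hMq : Mb ≤ Mb / b ^ 2 * σ t ^ 2 := by
          rw [← sub_nonneg]
          have heq : Mb / b ^ 2 * σ t ^ 2 - Mb = Mb / b ^ 2 * (σ t ^ 2 - b ^ 2) := by
            field_simp
          rw [heq]
          exact mul_nonneg (by positivity) (by linarith)
        calc c * σ t ^ 2 = σ t ^ 2 / 2 - Mb / b ^ 2 * σ t ^ 2 := by rw [hc]; ring
          _ ≤ σ t ^ 2 / 2 - Mb := by linarith
          _ ≤ -ρ' t := h1
      have : -(-ρ' t) / σ t ^ 2 ≤ -c := by
        rw [div_le_iff₀ hσsqpos]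
        nlinarith
      linarith
  -- conclude
  obtain ⟨T, hT⟩ : ∃ T : ℝ, T = 1 / (b * c) + 1 := ⟨_, rfl⟩
  have hTpos : 0 < T := by rw [hT]; positivity
  have h1 := hanti (Set.self_mem_Ici) (le_of_lt hTpos : (0:ℝ) ≤ T) (le_of_lt hTpos)
  have hg0 : g 0 = b⁻¹ := by rw [hgt, hb]; simp
  have hinv : 0 < (σ T)⁻¹ := by
    have := hσpos T hTpos.le
    positivity
  have hcT : b⁻¹ < c * T := by
    rw [hT]
    have he : c * (1 / (b * c) + 1) = 1 / b + c := by field_simp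
    rw [he, ← one_div b]
    linarith
  have hgT : g T = (σ T)⁻¹ + c * T := hgt T
  rw [hg0, hgT] at h1
  linarith

lemma fderiv_apply_const {g : ℝ × ℝ → (ℝ × ℝ →L[ℝ] ℝ)} {p : ℝ × ℝ}
    (hg : DifferentiableAt ℝ g p) (w z : ℝ × ℝ) :
    fderiv ℝ (fun q => g q w) p z = fderiv ℝ g p z w := by
  rw [fderiv_clm_apply hg (differentiableAt_const w)]
  simp

end Helpers

/-- Steepening lemma (wave breaking) for the mCH equation in nonlocal form: there is no
globally smooth bounded solution with integrable and bounded `u, u_x, u_xx`, possessing a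
persistent inflection point `x̄(t)` at which the initial slope satisfies
`u_x(x̄(0),0) < -√(2(M² + 2M³))`. -/
theorem mCH_wave_breaking (M : ℝ) (hM : 0 ≤ M) :
    ¬ ∃ (u : ℝ → ℝ → ℝ) (xb : ℝ → ℝ),
      -- (i) jointly smooth and bounded by M
      (ContDiff ℝ (⊤ : ℕ∞) (fun p : ℝ × ℝ => u p.1 p.2)) ∧
      (∀ (x t : ℝ), 0 ≤ t → |u x t| ≤ M) ∧
      -- (ii) u, u_x, u_xx integrable and bounded in x for each t ≥ 0
      (∀ t : ℝ, 0 ≤ t →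
        Integrable (fun x => u x t) ∧
        Integrable (fun x => deriv (fun y => u y t) x) ∧
        Integrable (fun x => iteratedDeriv 2 (fun y => u y t) x) ∧
        (∃ C : ℝ, ∀ x : ℝ, |u x t| ≤ C) ∧
        (∃ C : ℝ, ∀ x : ℝ, |deriv (fun y => u y t) x| ≤ C) ∧
        (∃ C : ℝ, ∀ x : ℝ, |iteratedDeriv 2 (fun y => u y t) x| ≤ C)) ∧
      -- (iii) the nonlocal mCH equation
      (∀ (x t : ℝ), 0 ≤ t →
        deriv (fun s => u x s) t + u x t * deriv (fun y => u y t) x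
          + deriv (fun x' => ∫ y : ℝ, (1 / 2) * Real.exp (-|x' - y|) *
              ((u y t) ^ 3 - (u y t) ^ 2 / 2 + (deriv (fun y' => u y' t) y) ^ 2 / 2)) x
          = 0) ∧
      -- (iv) persistent inflection point
      (Differentiable ℝ xb) ∧
      (∀ t : ℝ, 0 ≤ t → iteratedDeriv 2 (fun y => u y t) (xb t) = 0) ∧
      -- (v) steep enough initial slope at the inflection point
      (deriv (fun y => u y 0) (xb 0) < -Real.sqrt (2 * (M ^ 2 + 2 * M ^ 3))) := by
  rintro ⟨u, xb, hsm, hbd, hint, hpde, hxbd, hinfl, hslope⟩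
  have hUdiff : Differentiable ℝ (fun p : ℝ × ℝ => u p.1 p.2) := hsm.differentiable (by simp)
  have hf'cd : ContDiff ℝ (⊤ : ℕ∞) (fderiv ℝ (fun p : ℝ × ℝ => u p.1 p.2)) :=
    hsm.fderiv_right (by simp)
  have hf'diff : Differentiable ℝ (fderiv ℝ (fun p : ℝ × ℝ => u p.1 p.2)) :=
    hf'cd.differentiable (by simp)
  have hUhas : ∀ p, HasFDerivAt (fun p : ℝ × ℝ => u p.1 p.2)
      (fderiv ℝ (fun p : ℝ × ℝ => u p.1 p.2) p) p := fun p => (hUdiff p).hasFDerivAt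
  -- the spatial derivative as a function on the plane
  obtain ⟨V, hV⟩ : ∃ V : ℝ × ℝ → ℝ,
      V = fun p : ℝ × ℝ => fderiv ℝ (fun p : ℝ × ℝ => u p.1 p.2) p (1, 0) := ⟨_, rfl⟩
  have hVp : ∀ p : ℝ × ℝ, V p = fderiv ℝ (fun p : ℝ × ℝ => u p.1 p.2) p (1, 0) :=
    fun p => by rw [hV]
  have hVdiff : Differentiable ℝ V := by
    rw [hV]; exact hf'diff.clm_apply (differentiable_const _)
  -- pointwise identities for the first partial derivatives
  have hv : ∀ x t : ℝ, deriv (fun y => u y t) x = V (x, t) := by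
    intro x t
    rw [hVp (x, t)]
    exact (hasDerivAt_comp_fst (hUdiff (x, t))).deriv
  have hu_hd : ∀ x t : ℝ, HasDerivAt (fun y => u y t) (V (x, t)) x := by
    intro x t
    rw [hVp (x, t)]
    exact hasDerivAt_comp_fst (hUdiff (x, t))
  have hut : ∀ x t : ℝ, deriv (fun s => u x s) t
      = fderiv ℝ (fun p : ℝ × ℝ => u p.1 p.2) (x, t) (0, 1) := by
    intro x t
    exact (hasDerivAt_comp_snd (hUdiff (x, t))).deriv
  -- second spatial derivative
  have hV_hd : ∀ x t : ℝ, HasDerivAt (fun y => V (y, t)) (fderiv ℝ V (x, t) (1, 0)) x :=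
    fun x t => hasDerivAt_comp_fst (hVdiff (x, t))
  have hw : ∀ x t : ℝ, iteratedDeriv 2 (fun y => u y t) x = fderiv ℝ V (x, t) (1, 0) := by
    intro x t
    have h2 : iteratedDeriv 2 (fun y => u y t) = deriv (deriv (fun y => u y t)) := by
      rw [show (2:ℕ) = 1 + 1 from rfl, iteratedDeriv_succ, iteratedDeriv_one]
    rw [h2]
    have hde : deriv (fun y => u y t) = fun y => V (y, t) := funext fun y => hv y t
    rw [hde]
    exact (hV_hd x t).deriv
  -- the slope at the inflection point and its derivative
  have hMb : 0 ≤ M ^ 2 + 2 * M ^ 3 := by nlinarith [pow_nonneg hM 3, sq_nonneg M]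
  have hρd : ∀ t : ℝ, HasDerivAt (fun s => V (xb s, s))
      (deriv xb t * fderiv ℝ V (xb t, t) (1, 0) + fderiv ℝ V (xb t, t) (0, 1)) t := by
    intro t
    have hinner : HasDerivAt (fun s => (xb s, s)) (deriv xb t, 1) t :=
      ((hxbd t).hasDerivAt).prodMk (hasDerivAt_id t)
    have houter : HasDerivAt (fun s => V (xb s, s))
        (fderiv ℝ V (xb t, t) (deriv xb t, 1)) t :=
      HasFDerivAt.comp_hasDerivAt (f := fun s => (xb s, s)) t
        (hVdiff (xb t, t)).hasFDerivAt hinner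
    convert houter using 1
    have hsplit : (deriv xb t, (1:ℝ)) = deriv xb t • ((1:ℝ), (0:ℝ)) + ((0:ℝ), (1:ℝ)) := by
      simp [Prod.ext_iff]
    rw [hsplit, ContinuousLinearMap.map_add, ContinuousLinearMap.map_smul, smul_eq_mul]
  -- the key inequality at the inflection point
  have main : ∀ t : ℝ, 0 ≤ t →
      fderiv ℝ V (xb t, t) (0, 1) ≤ -(V (xb t, t)) ^ 2 / 2 + (M ^ 2 + 2 * M ^ 3) := by
    intro t ht
    -- continuity and integrability of q
    have hu_c : Continuous (fun y => u y t) :=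
      hsm.continuous.comp (continuous_id.prodMk continuous_const)
    have hde : (fun y => deriv (fun y' => u y' t) y) = fun y => V (y, t) :=
      funext fun y => hv y t
    have hd_c : Continuous (fun y => deriv (fun y' => u y' t) y) := by
      rw [hde]
      exact (hVdiff.continuous).comp (continuous_id.prodMk continuous_const)
    have hq_c : Continuous (fun y => (u y t) ^ 3 - (u y t) ^ 2 / 2
        + (deriv (fun y' => u y' t) y) ^ 2 / 2) :=
      (((hu_c.pow 3).sub ((hu_c.pow 2).div_const 2)).add ((hd_c.pow 2).div_const 2))
    obtain ⟨hui, hvi, -, ⟨C0, hC0⟩, ⟨C1, hC1⟩, -⟩ := hint t ht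
    have hu2 : Integrable (fun y => (u y t) ^ 2) := by
      have := hui.bdd_mul hu_c.aestronglyMeasurable
        (Filter.Eventually.of_forall fun y => by rw [Real.norm_eq_abs]; exact hC0 y)
      refine this.congr (Filter.Eventually.of_forall fun y => ?_)
      simp [Pi.mul_apply]; ring
    have hu3 : Integrable (fun y => (u y t) ^ 3) := by
      have := hu2.bdd_mul hu_c.aestronglyMeasurable
        (Filter.Eventually.of_forall fun y => by rw [Real.norm_eq_abs]; exact hC0 y)
      refine this.congr (Filter.Eventually.of_forall fun y => ?_)
      simp [Pi.mul_apply]; ring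
    have hv2 : Integrable (fun y => (deriv (fun y' => u y' t) y) ^ 2) := by
      have := hvi.bdd_mul hd_c.aestronglyMeasurable
        (Filter.Eventually.of_forall fun y => by rw [Real.norm_eq_abs]; exact hC1 y)
      refine this.congr (Filter.Eventually.of_forall fun y => ?_)
      simp [Pi.mul_apply]; ring
    have hq_i : Integrable (fun y => (u y t) ^ 3 - (u y t) ^ 2 / 2
        + (deriv (fun y' => u y' t) y) ^ 2 / 2) :=
      ((hu3.sub (hu2.div_const 2)).add (hv2.div_const 2))
    obtain ⟨F', hF1, hF2, hF3⟩ := conv_package hq_c hq_i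
    -- rewrite the PDE
    have hEq : (fun x' => fderiv ℝ (fun p : ℝ × ℝ => u p.1 p.2) (x', t) (0, 1))
        = fun x' => -(u x' t * V (x', t)) - F' x' := by
      funext x'
      have hp := hpde x' t ht
      rw [hut x' t, hv x' t, (hF1 x').deriv] at hp
      linarith
    set x := xb t with hx
    -- derivative of the left-hand side via symmetry of second derivatives
    have hsym := second_derivative_symmetric hUhas
      ((hf'diff (x, t)).hasFDerivAt) ((1:ℝ), (0:ℝ)) ((0:ℝ), (1:ℝ))
    have hL : HasDerivAt (fun x' => fderiv ℝ (fun p : ℝ × ℝ => u p.1 p.2) (x', t) (0, 1))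
        (fderiv ℝ V (x, t) (0, 1)) x := by
      have h1 := hasDerivAt_comp_fst
        (((hf'diff (x, t)).clm_apply (differentiableAt_const ((0:ℝ), (1:ℝ)))) :
          DifferentiableAt ℝ (fun p : ℝ × ℝ =>
            fderiv ℝ (fun p : ℝ × ℝ => u p.1 p.2) p (0, 1)) (x, t))
      rw [fderiv_apply_const (hf'diff (x, t)) ((0:ℝ), (1:ℝ)) ((1:ℝ), (0:ℝ)), hsym] at h1
      have h2 : fderiv ℝ V (x, t) (0, 1)
          = fderiv ℝ (fderiv ℝ (fun p : ℝ × ℝ => u p.1 p.2)) (x, t) (0, 1) (1, 0) := by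
        rw [hV]
        exact fderiv_apply_const (hf'diff (x, t)) ((1:ℝ), (0:ℝ)) ((0:ℝ), (1:ℝ))
      rw [h2]
      exact h1
    rw [hEq] at hL
    -- derivative of the right-hand side
    have hR : HasDerivAt (fun x' => -(u x' t * V (x', t)) - F' x')
        (-(V (x, t) * V (x, t) + u x t * fderiv ℝ V (x, t) (1, 0))
          - ((∫ y : ℝ, (1 / 2) * Real.exp (-|x - y|) *
              ((u y t) ^ 3 - (u y t) ^ 2 / 2 + (deriv (fun y' => u y' t) y) ^ 2 / 2))
            - ((u x t) ^ 3 - (u x t) ^ 2 / 2 + (deriv (fun y' => u y' t) x) ^ 2 / 2))) x :=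
      (((hu_hd x t).mul (hV_hd x t)).neg).sub (hF2 x)
    have hkey := hL.unique hR
    -- at the inflection point the second spatial derivative vanishes
    have hw0 : fderiv ℝ V (x, t) (1, 0) = 0 := by
      rw [← hw x t]
      exact hinfl t ht
    -- lower bound for the nonlocal term
    have hFlow : -(M ^ 3 + M ^ 2 / 2) ≤ ∫ y : ℝ, (1 / 2) * Real.exp (-|x - y|) *
        ((u y t) ^ 3 - (u y t) ^ 2 / 2 + (deriv (fun y' => u y' t) y) ^ 2 / 2) := by
      refine hF3 (M ^ 3 + M ^ 2 / 2) (by nlinarith [pow_nonneg hM 3, sq_nonneg M]) ?_ x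
      intro y
      have habs := abs_le.mp (hbd y t ht)
      have hcube : -(M ^ 3) ≤ (u y t) ^ 3 := by
        nlinarith [sq_nonneg (u y t - M), sq_nonneg (u y t + M), sq_nonneg (u y t), sq_nonneg M]
      nlinarith [sq_nonneg (deriv (fun y' => u y' t) y), habs.1, habs.2]
    -- assemble
    have habs := abs_le.mp (hbd x t ht)
    have hcube : (u x t) ^ 3 ≤ M ^ 3 := by
      nlinarith [sq_nonneg (u x t - M), sq_nonneg (u x t + M), sq_nonneg (u x t), sq_nonneg M]
    rw [hv x t] at hkey
    rw [hkey, hw0]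
    nlinarith [sq_nonneg (u x t), sq_nonneg M, hFlow]
  -- Riccati blow-up
  refine riccati_blowup_s5 (ρ := fun s => V (xb s, s))
    (ρ' := fun s => deriv xb s * fderiv ℝ V (xb s, s) (1, 0) + fderiv ℝ V (xb s, s) (0, 1))
    hMb hρd ?_ ?_
  · intro t ht
    have hw0 : fderiv ℝ V (xb t, t) (1, 0) = 0 := by
      rw [← hw (xb t) t]
      exact hinfl t ht
    simpa only [hw0, mul_zero, zero_add] using main t ht
  · show V (xb 0, 0) < -Real.sqrt (2 * (M ^ 2 + 2 * M ^ 3))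
    rw [← hv (xb 0) 0]
    exact hslope
end

section
/- Let c ∈ ℝ, let I ⊆ ℝ be a nonempty open interval, and let φ : ℝ → ℝ be three times continuously differentiable on I, satisfying the traveling-wave equation −c·φ'(ξ) + c·φ'''(ξ) = φ(ξ)·φ'''(ξ) + 2φ'(ξ)·φ''(ξ) − 3φ(ξ)²·φ'(ξ) for all ξ ∈ I. Then there exist constants a, d ∈ ℝ such that for all ξ ∈ I: (φ'(ξ))²·(c − φ(ξ)) = φ(ξ)²·(c − φ(ξ)²/2) + a·φ(ξ) + d. -/
open Set

/-!
Integrating the traveling-wave ODE once gives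
`(c - φ) φ'' - c φ - φ'²/2 + φ³ = a`, because the ODE says exactly that the derivative of the
left-hand side vanishes. Multiplying this by `2φ'` turns both sides into exact derivatives:
`(φ'² (c - φ))' = 2φ' (c - φ) φ'' - φ'³` and `(φ² (c - φ²/2) + 2aφ)' = 2φ' (c φ - φ³ + a)`,
so a second integration yields the quadrature form with constant `2a`.
-/

theorem IsOpen.exists_eq_const_of_hasDerivAt_zero {I : Set ℝ} (hI : IsOpen I)
    (hIconn : I.OrdConnected) {f : ℝ → ℝ} (hf : ∀ x ∈ I, HasDerivAt f 0 x) :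
    ∃ a, ∀ x ∈ I, f x = a :=
  hI.exists_is_const_of_deriv_eq_zero hIconn.isPreconnected
    (fun x hx => (hf x hx).differentiableAt.differentiableWithinAt) (fun x hx => (hf x hx).deriv)

theorem ContDiffOn.hasDerivAt_deriv {n : WithTop ℕ∞} {s : Set ℝ} {f : ℝ → ℝ}
    (hf : ContDiffOn ℝ n f s) (hs : IsOpen s) (hn : n ≠ 0) {x : ℝ} (hx : x ∈ s) :
    HasDerivAt f (deriv f x) x :=
  ((hf.differentiableOn hn).differentiableAt (hs.mem_nhds hx)).hasDerivAt

section TravelingWave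

variable {I : Set ℝ} (hI : IsOpen I) (hIconn : I.OrdConnected) {c : ℝ} {φ φ₁ φ₂ φ₃ : ℝ → ℝ}
  (hφ : ∀ x ∈ I, HasDerivAt φ (φ₁ x) x) (hφ₁ : ∀ x ∈ I, HasDerivAt φ₁ (φ₂ x) x)
include hI hIconn hφ hφ₁

theorem mCH_travelingWave_integrate_once (hφ₂ : ∀ x ∈ I, HasDerivAt φ₂ (φ₃ x) x)
    (hode : ∀ x ∈ I, -c * φ₁ x + c * φ₃ x =
      φ x * φ₃ x + 2 * φ₁ x * φ₂ x - 3 * φ x ^ 2 * φ₁ x) :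
    ∃ a, ∀ x ∈ I, (c - φ x) * φ₂ x - c * φ x - φ₁ x ^ 2 / 2 + φ x ^ 3 = a := by
  refine hI.exists_eq_const_of_hasDerivAt_zero hIconn fun x hx => ?_
  have hF := (((((hasDerivAt_const x c).sub (hφ x hx)).mul (hφ₂ x hx)).sub
    ((hφ x hx).const_mul c)).sub (((hφ₁ x hx).pow 2).div_const 2)).add ((hφ x hx).pow 3)
  refine hF.congr_deriv ?_
  simp only [Pi.sub_apply]
  push_cast
  linear_combination hode x hx

theorem mCH_travelingWave_integrate_twice {a : ℝ}
    (hfirst : ∀ x ∈ I, (c - φ x) * φ₂ x - c * φ x - φ₁ x ^ 2 / 2 + φ x ^ 3 = a) :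
    ∃ d, ∀ x ∈ I, φ₁ x ^ 2 * (c - φ x) = φ x ^ 2 * (c - φ x ^ 2 / 2) + 2 * a * φ x + d := by
  obtain ⟨d, hd⟩ : ∃ d, ∀ x ∈ I,
      φ₁ x ^ 2 * (c - φ x) - φ x ^ 2 * (c - φ x ^ 2 / 2) - 2 * a * φ x = d := by
    refine hI.exists_eq_const_of_hasDerivAt_zero hIconn fun x hx => ?_
    have hG := ((((hφ₁ x hx).pow 2).mul ((hasDerivAt_const x c).sub (hφ x hx))).sub
      (((hφ x hx).pow 2).mul ((hasDerivAt_const x c).sub (((hφ x hx).pow 2).div_const 2)))).sub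
      ((hφ x hx).const_mul (2 * a))
    refine hG.congr_deriv ?_
    simp only [Pi.sub_apply, Pi.pow_apply]
    push_cast
    linear_combination 2 * φ₁ x * hfirst x hx
  exact ⟨d, fun x hx => by linear_combination hd x hx⟩

end TravelingWave

theorem mCH_first_integral_general (c : ℝ) (I : Set ℝ) (hIopen : IsOpen I)
    (hIconn : I.OrdConnected) (φ : ℝ → ℝ)
    (hφ : ContDiffOn ℝ 3 φ I)
    (hode : ∀ ξ ∈ I,
      -c * deriv φ ξ + c * iteratedDeriv 3 φ ξ =
        φ ξ * iteratedDeriv 3 φ ξ + 2 * deriv φ ξ * iteratedDeriv 2 φ ξ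
          - 3 * (φ ξ) ^ 2 * deriv φ ξ) :
    ∃ a d : ℝ, ∀ ξ ∈ I,
      (deriv φ ξ) ^ 2 * (c - φ ξ) =
        (φ ξ) ^ 2 * (c - (φ ξ) ^ 2 / 2) + a * φ ξ + d := by
  have hφ₁ : ContDiffOn ℝ 2 (deriv φ) I := hφ.deriv_of_isOpen hIopen (by norm_num)
  have hφ₂ : ContDiffOn ℝ 1 (deriv (deriv φ)) I := hφ₁.deriv_of_isOpen hIopen (by norm_num)
  simp only [iteratedDeriv_succ, iteratedDeriv_zero] at hode
  have hD₀ : ∀ x ∈ I, HasDerivAt φ (deriv φ x) x :=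
    fun x hx => hφ.hasDerivAt_deriv hIopen (by norm_num) hx
  have hD₁ : ∀ x ∈ I, HasDerivAt (deriv φ) (deriv (deriv φ) x) x :=
    fun x hx => hφ₁.hasDerivAt_deriv hIopen (by norm_num) hx
  have hD₂ : ∀ x ∈ I, HasDerivAt (deriv (deriv φ)) (deriv (deriv (deriv φ)) x) x :=
    fun x hx => hφ₂.hasDerivAt_deriv hIopen one_ne_zero hx
  obtain ⟨a, ha⟩ := mCH_travelingWave_integrate_once hIopen hIconn hD₀ hD₁ hD₂ hode
  obtain ⟨d, hd⟩ := mCH_travelingWave_integrate_twice hIopen hIconn hD₀ hD₁ ha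
  exact ⟨2 * a, d, hd⟩

/-- First integral of the traveling-wave ODE for the mCH equation: a `C³` solution of
`-cφ' + cφ''' = φφ''' + 2φ'φ'' - 3φ²φ'` on a nonempty open interval `I` satisfies
`(φ')²(c - φ) = φ²(c - φ²/2) + aφ + d` on `I` for some constants `a, d`. -/
theorem mCH_first_integral (c : ℝ) (I : Set ℝ) (hIopen : IsOpen I)
    (hIne : I.Nonempty) (hIconn : I.OrdConnected) (φ : ℝ → ℝ)
    (hφ : ContDiffOn ℝ 3 φ I)
    (hode : ∀ ξ ∈ I,
      -c * deriv φ ξ + c * iteratedDeriv 3 φ ξ =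
        φ ξ * iteratedDeriv 3 φ ξ + 2 * deriv φ ξ * iteratedDeriv 2 φ ξ
          - 3 * (φ ξ) ^ 2 * deriv φ ξ) :
    ∃ a d : ℝ, ∀ ξ ∈ I,
      (deriv φ ξ) ^ 2 * (c - φ ξ) =
        (φ ξ) ^ 2 * (c - (φ ξ) ^ 2 / 2) + a * φ ξ + d :=
  mCH_first_integral_general c I hIopen hIconn φ hφ hode
end

section
/- Let c, a, d, m, p, q ∈ ℝ with q ≠ 0 and c ≠ m, and suppose that for every y ∈ ℝ: y²·(c − y²/2) + a·y + d = −(1/2)·(y − m)²·((y − p)² + q²) (so the quartic P(y) = y²(c − y²/2) + ay + d has m as its only real zero, of multiplicity two). If φ : ℝ → ℝ is differentiable and satisfies (φ'(ξ))²·(c − φ(ξ)) = φ(ξ)²·(c − φ(ξ)²/2) + a·φ(ξ) + d for all ξ ∈ ℝ, then either φ(ξ) = m for all ξ, or φ is unbounded (its range is not a bounded subset of ℝ). -/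
/-!
Off the level `m` the factorization gives `(φ')² (φ - c) = ½ (φ - m)² ((φ - p)² + q²) > 0`, so
there `φ > c` and `φ' ≠ 0`; by Darboux, `φ'` keeps its sign as long as `φ` stays away from `m`.
Reflecting `φ - m` and `ξ` if necessary, start at a point where `φ - m > 0` is increasing: then
`φ` never returns to `m`, keeps increasing, and under a bound `φ ≤ M` the equation forces
`(φ')² ≥ (φ(ξ₀) - m)² q² / (2 (M - c))`, so `φ` grows at least linearly.
-/

open Bornology Set

section DerivSign

variable {g : ℝ → ℝ}

theorem deriv_pos_of_deriv_ne_zero_of_convex {s : Set ℝ} {x₀ : ℝ} (hg : Differentiable ℝ g)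
    (hs : Convex ℝ s) (hne : ∀ t ∈ s, deriv g t ≠ 0) (hx₀ : x₀ ∈ s) (hd : 0 < deriv g x₀) :
    ∀ t ∈ s, 0 < deriv g t :=
  (hasDerivWithinAt_forall_lt_or_forall_gt_of_forall_ne hs
    (fun t _ => (hg t).hasDerivAt.hasDerivWithinAt) hne).resolve_left
    fun hneg => (hneg x₀ hx₀).not_gt hd

/-- At the first return of `g` to the level `m` it would have had to decrease, but by Darboux
`g'` stays positive as long as `g > m`. -/
theorem lt_of_deriv_ne_zero_of_lt {m x₀ : ℝ} (hg : Differentiable ℝ g)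
    (hne : ∀ t, m < g t → deriv g t ≠ 0) (h₀ : m < g x₀) (hd : 0 < deriv g x₀) :
    ∀ t, x₀ ≤ t → m < g t := by
  by_contra! ⟨x₁, hx₁, hle⟩
  set S := Ici x₀ ∩ g ⁻¹' Iic m
  have hSne : S.Nonempty := ⟨x₁, hx₁, hle⟩
  have hSbdd : BddBelow S := ⟨x₀, fun t ht => ht.1⟩
  obtain ⟨hxb, hb⟩ : sInf S ∈ S :=
    (isClosed_Ici.inter (isClosed_Iic.preimage hg.continuous)).csInf_mem hSne hSbdd
  have habove : ∀ t ∈ Ico x₀ (sInf S), m < g t := fun t ht =>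
    not_le.1 fun h => (csInf_le hSbdd ⟨ht.1, h⟩).not_gt ht.2
  have hdpos := deriv_pos_of_deriv_ne_zero_of_convex hg (convex_Ico x₀ (sInf S))
    (fun t ht => hne t (habove t ht))
    ⟨le_rfl, (mem_Ici.1 hxb).lt_of_ne fun h => (h ▸ hb : g x₀ ≤ m).not_gt h₀⟩ hd
  have hmono : MonotoneOn g (Icc x₀ (sInf S)) :=
    monotoneOn_of_deriv_nonneg (convex_Icc _ _) hg.continuous.continuousOn
      hg.differentiableOn fun t ht => by
        rw [interior_Icc] at ht
        exact (hdpos t (Ioo_subset_Ico_self ht)).le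
  exact (h₀.trans_le (hmono (left_mem_Icc.2 hxb) (right_mem_Icc.2 hxb) hxb)).not_ge hb

theorem deriv_pos_of_deriv_ne_zero_of_lt {m x₀ : ℝ} (hg : Differentiable ℝ g)
    (hne : ∀ t, m < g t → deriv g t ≠ 0) (h₀ : m < g x₀) (hd : 0 < deriv g x₀) :
    ∀ t, x₀ ≤ t → 0 < deriv g t :=
  deriv_pos_of_deriv_ne_zero_of_convex hg (convex_Ici x₀)
    (fun t ht => hne t (lt_of_deriv_ne_zero_of_lt hg hne h₀ hd t ht)) self_mem_Ici hd

theorem not_bddAbove_range_of_le_deriv {k x₀ : ℝ} (hg : Differentiable ℝ g) (hk : 0 < k)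
    (h : ∀ t, x₀ ≤ t → k ≤ deriv g t) : ¬ BddAbove (range g) := by
  rintro ⟨B, hB⟩
  have hgrowth := (convex_Ici x₀).mul_sub_le_image_sub_of_le_deriv hg.continuous.continuousOn
    hg.differentiableOn (fun t ht => h t (interior_subset ht))
  set t := x₀ + (|B - g x₀| + 1) / k
  have hxt : x₀ ≤ t := le_add_of_nonneg_right (by positivity)
  have hkt : k * (t - x₀) = |B - g x₀| + 1 := by
    simp only [t, add_sub_cancel_left]
    field_simp
  have := hgrowth x₀ self_mem_Ici t hxt hxt
  have := hB (mem_range_self t)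
  linarith [le_abs_self (B - g x₀)]

theorem not_isBounded_range_of_le_deriv_sq {m δ x₀ : ℝ} (hg : Differentiable ℝ g) (hδ : 0 < δ)
    (hne : ∀ t, g t ≠ m → deriv g t ≠ 0)
    (hsq : ∀ t, |g x₀ - m| ≤ |g t - m| → δ ≤ deriv g t ^ 2) (h₀ : g x₀ ≠ m) :
    ¬ IsBounded (range g) := by
  wlog hgt : m < g x₀ generalizing g m
  · have hneg := this (g := -g) (m := -m) hg.neg
      (fun t ht => by simpa [deriv.neg] using hne t (by simpa using ht))
      (fun t ht => by simpa [deriv.neg, abs_sub_comm, ← abs_neg (g _ - m)] using hsq t (by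
        simpa [abs_sub_comm, neg_add_eq_sub] using ht))
      (by simpa using h₀) (by simpa using lt_of_le_of_ne (not_lt.1 hgt) h₀)
    exact fun hb => hneg (by rw [← neg_range']; exact hb.neg)
  wlog hd : 0 < deriv g x₀ generalizing g x₀
  · have hrefl := this (g := fun t => g (-t)) (x₀ := -x₀) (hg.comp differentiable_neg)
      (fun t ht => by simpa [deriv_comp_neg] using hne (-t) ht)
      (fun t ht => by simpa [deriv_comp_neg] using hsq (-t) (by simpa using ht))
      (by simpa using h₀) (by simpa using hgt)
      (by simpa [deriv_comp_neg] using (not_lt.1 hd).lt_of_ne (hne x₀ h₀))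
    rwa [← neg_surjective.range_comp g]
  have hdpos := deriv_pos_of_deriv_ne_zero_of_lt hg (fun t ht => hne t ht.ne') hgt hd
  have hmono : MonotoneOn g (Ici x₀) :=
    (strictMonoOn_of_deriv_pos (convex_Ici x₀) hg.continuous.continuousOn
      fun t ht => hdpos t (interior_subset ht)).monotoneOn
  have hk : ∀ t, x₀ ≤ t → √δ ≤ deriv g t := fun t ht => by
    have hge : g x₀ ≤ g t := hmono self_mem_Ici ht ht
    refine (Real.sqrt_le_left (hdpos t ht).le).2 (hsq t ?_)
    rw [abs_of_pos (sub_pos.2 hgt), abs_of_pos (sub_pos.2 (hgt.trans_le hge))]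
    linarith
  exact fun hb => not_bddAbove_range_of_le_deriv hg (Real.sqrt_pos.2 hδ) hk hb.bddAbove

end DerivSign

section QuarticWave

variable {c m p q y v : ℝ}

theorem quartic_wave_lt_and_ne_zero
    (h : v ^ 2 * (c - y) = -(1 / 2) * (y - m) ^ 2 * ((y - p) ^ 2 + q ^ 2)) (hq : q ≠ 0)
    (hy : y ≠ m) : c < y ∧ v ≠ 0 := by
  have hneg : v ^ 2 * (c - y) < 0 := by
    rw [h]
    have : 0 < (y - m) ^ 2 := sq_pos_of_ne_zero (sub_ne_zero.2 hy)
    have : 0 < (y - p) ^ 2 + q ^ 2 := by positivity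
    nlinarith
  exact ⟨sub_neg.1 (neg_of_mul_neg_right hneg (sq_nonneg v)), fun hv => by simp [hv] at hneg⟩

theorem quartic_wave_sq_mul_le {M : ℝ}
    (h : v ^ 2 * (c - y) = -(1 / 2) * (y - m) ^ 2 * ((y - p) ^ 2 + q ^ 2)) (hM : y ≤ M) :
    (y - m) ^ 2 * q ^ 2 ≤ 2 * (M - c) * v ^ 2 := by
  nlinarith [mul_nonneg (sq_nonneg v) (sub_nonneg.2 hM),
    mul_nonneg (sq_nonneg (y - m)) (sq_nonneg (y - p))]

end QuarticWave

theorem mCH_no_bounded_wave_one_real_zero_general (c a d m p q : ℝ) (hq : q ≠ 0)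
    (hfac : ∀ y : ℝ,
      y ^ 2 * (c - y ^ 2 / 2) + a * y + d =
        -(1 / 2) * (y - m) ^ 2 * ((y - p) ^ 2 + q ^ 2))
    (φ : ℝ → ℝ) (hφ : Differentiable ℝ φ)
    (heq : ∀ ξ : ℝ,
      (deriv φ ξ) ^ 2 * (c - φ ξ) =
        (φ ξ) ^ 2 * (c - (φ ξ) ^ 2 / 2) + a * φ ξ + d) :
    (∀ ξ : ℝ, φ ξ = m) ∨ ¬ IsBounded (Set.range φ) := by
  have hwave : ∀ ξ, deriv φ ξ ^ 2 * (c - φ ξ) =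
      -(1 / 2) * (φ ξ - m) ^ 2 * ((φ ξ - p) ^ 2 + q ^ 2) :=
    fun ξ => (heq ξ).trans (hfac (φ ξ))
  by_contra! ⟨⟨ξ₀, hξ₀⟩, hb⟩
  obtain ⟨M, hM⟩ := hb.bddAbove
  have hcM : c < M :=
    (quartic_wave_lt_and_ne_zero (hwave ξ₀) hq hξ₀).1.trans_le (hM (mem_range_self ξ₀))
  refine not_isBounded_range_of_le_deriv_sq hφ
    (δ := (φ ξ₀ - m) ^ 2 * q ^ 2 / (2 * (M - c))) (by have := sub_ne_zero.2 hξ₀; positivity)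
    (fun ξ hξ => (quartic_wave_lt_and_ne_zero (hwave ξ) hq hξ).2) (fun ξ hξ => ?_) hξ₀ hb
  rw [div_le_iff₀' (by linarith)]
  calc (φ ξ₀ - m) ^ 2 * q ^ 2 ≤ (φ ξ - m) ^ 2 * q ^ 2 := by gcongr 1; exact sq_le_sq.2 hξ
    _ ≤ _ := quartic_wave_sq_mul_le (hwave ξ) (hM (mem_range_self ξ))

/-- Non-existence of bounded nonconstant traveling waves when the quartic
`P(y) = y²(c - y²/2) + ay + d` has a single (double) real zero `m`: any differentiable
global solution of `(φ')²(c - φ) = P(φ)` is either identically `m` or unbounded. -/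
theorem mCH_no_bounded_wave_one_real_zero (c a d m p q : ℝ) (hq : q ≠ 0) (hcm : c ≠ m)
    (hfac : ∀ y : ℝ,
      y ^ 2 * (c - y ^ 2 / 2) + a * y + d =
        -(1 / 2) * (y - m) ^ 2 * ((y - p) ^ 2 + q ^ 2))
    (φ : ℝ → ℝ) (hφ : Differentiable ℝ φ)
    (heq : ∀ ξ : ℝ,
      (deriv φ ξ) ^ 2 * (c - φ ξ) =
        (φ ξ) ^ 2 * (c - (φ ξ) ^ 2 / 2) + a * φ ξ + d) :
    (∀ ξ : ℝ, φ ξ = m) ∨ ¬ IsBounded (Set.range φ) :=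
  mCH_no_bounded_wave_one_real_zero_general c a d m p q hq hfac φ hφ heq
end
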